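/- arXiv:1608.02703 — 2 statements merged into one kernel-verified Lean document; each statement's English description precedes it below -/
import Mathlib

section
/- For all integers m ≥ 1 and all positive integers r, V_m^+(r) = ∑_{n=1}^{r} ∑_{j=0}^{m−1} (−1)^{m−1−j} · C(m, j) · J_j(n). -/
/-!
Möbius inversion over the gcd gives `V_m^+(r) = ∑_{d ≤ r} μ(d) ⌊r/d⌋^m` and
`J_j(n) = ∑_{d ∣ n} μ(d) (n/d)^j`. Since `∑_{j<m} (-1)^(m-1-j) C(m,j) x^j = x^m - (x-1)^m`, the
`n`-th summand of the right-hand side is `∑_{d ∣ n} μ(d) ((n/d)^m - (n/d - 1)^m)`. As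
`⌊n/d⌋ - ⌊(n-1)/d⌋` is `1` if `d ∣ n` and `0` otherwise, this is `V_m^+(n) - V_m^+(n-1)`, and the
sum telescopes.
-/

/-- Jordan totient: number of `m`-tuples `x` with `1 ≤ xᵢ ≤ n` and `gcd(x₁,…,x_m,n) = 1`. -/
def J (m n : ℕ) : ℕ :=
  ((Fintype.piFinset fun _ : Fin m => Finset.Icc (1 : ℕ) n).filter
    fun x => Nat.gcd (Finset.univ.gcd x) n = 1).card

/-- Number of lattice points visible from the origin in `(0, r]^m`. -/
noncomputable def Vplus (m r : ℕ) : ℕ :=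
  ((Fintype.piFinset fun _ : Fin m => Finset.Icc (1 : ℤ) (r : ℤ)).filter
    fun x => Finset.univ.gcd x = 1).card

open Finset ArithmeticFunction
open scoped ArithmeticFunction.Moebius

theorem card_filter_eq_one_eq_sum_moebius {α : Type*} (s : Finset α) (G : α → ℕ) (D : Finset ℕ)
    (hG : ∀ x ∈ s, G x ≠ 0) (hD : ∀ x ∈ s, (G x).divisors ⊆ D) :
    (#{x ∈ s | G x = 1} : ℤ) = ∑ d ∈ D, μ d * #{x ∈ s | d ∣ G x} := by
  have hμ : ∀ x ∈ s, ∑ d ∈ D, (if d ∣ G x then μ d else 0) = if G x = 1 then 1 else 0 := by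
    intro x hx
    have hfilter : {d ∈ D | d ∣ G x} = (G x).divisors := by
      ext d
      simp only [mem_filter, Nat.mem_divisors, and_iff_left (hG x hx)]
      exact ⟨And.right, fun h => ⟨hD x hx (Nat.mem_divisors.2 ⟨h, hG x hx⟩), h⟩⟩
    rw [← sum_filter, hfilter, ← coe_mul_zeta_apply, moebius_mul_coe_zeta, one_apply]
  simp only [card_filter, Nat.cast_sum, Nat.cast_ite, Nat.cast_one, Nat.cast_zero, mul_sum,
    mul_ite, mul_one, mul_zero]
  rw [sum_comm, ← sum_congr rfl hμ]

theorem card_filter_piFinset_const_forall {ι κ : Type*} [DecidableEq ι] [Fintype ι] (s : Finset κ)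
    (p : κ → Prop) [DecidablePred p] [DecidablePred fun x : ι → κ => ∀ i, p (x i)] :
    #{x ∈ Fintype.piFinset fun _ : ι => s | ∀ i, p (x i)} = #{y ∈ s | p y} ^ Fintype.card ι := by
  have hpi : {x ∈ Fintype.piFinset fun _ : ι => s | ∀ i, p (x i)} =
      Fintype.piFinset fun _ => {y ∈ s | p y} := by
    ext x
    simp [forall_and]
  rw [hpi, Fintype.card_piFinset, prod_const, card_univ]

theorem Nat.card_Icc_filter_dvd (N d : ℕ) : #{y ∈ Icc 1 N | d ∣ y} = N / d := by
  rw [← Nat.Ioc_filter_dvd_card_eq_div, ← Icc_add_one_left_eq_Ioc, zero_add]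

theorem Int.card_Icc_filter_dvd (N d : ℕ) : #{y ∈ Icc (1 : ℤ) N | (d : ℤ) ∣ y} = N / d := by
  have hmap : {y ∈ Icc 1 N | d ∣ y}.map Nat.castEmbedding = {y ∈ Icc (1 : ℤ) N | (d : ℤ) ∣ y} := by
    ext y
    simp only [mem_map, mem_filter, mem_Icc, Nat.castEmbedding_apply]
    constructor
    · rintro ⟨y, ⟨⟨h1, h2⟩, hd⟩, rfl⟩
      exact ⟨⟨by exact_mod_cast h1, by exact_mod_cast h2⟩, Int.natCast_dvd_natCast.2 hd⟩
    · rintro ⟨⟨h1, h2⟩, hd⟩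
      lift y to ℕ using by lia
      exact ⟨y, ⟨⟨by exact_mod_cast h1, by exact_mod_cast h2⟩, Int.natCast_dvd_natCast.1 hd⟩, rfl⟩
  rw [← hmap, card_map, Nat.card_Icc_filter_dvd]

theorem sum_range_alternating_choose_mul_pow {R : Type*} [CommRing R] (m : ℕ) (x : R) :
    ∑ j ∈ range m, (-1) ^ (m - 1 - j) * (m.choose j : R) * x ^ j = x ^ m - (x - 1) ^ m := by
  rw [sub_eq_add_neg x 1, add_pow, sum_range_succ, Nat.sub_self, pow_zero, mul_one,
    Nat.choose_self, Nat.cast_one, mul_one, sub_add_cancel_right, ← sum_neg_distrib]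
  refine sum_congr rfl fun j hj => ?_
  rw [show m - j = m - 1 - j + 1 by grind, pow_succ]
  ring

theorem J_eq_sum_moebius (j n : ℕ) (hn : n ≠ 0) :
    (J j n : ℤ) = ∑ d ∈ n.divisors, μ d * ((n / d : ℕ) : ℤ) ^ j := by
  unfold J
  rw [card_filter_eq_one_eq_sum_moebius _ _ n.divisors (fun x _ => by simp [hn])
    (fun x _ => Nat.divisors_subset_of_dvd hn (Nat.gcd_dvd_right _ _))]
  refine sum_congr rfl fun d hd => ?_
  have hdvd : ∀ x : Fin j → ℕ, d ∣ Nat.gcd (univ.gcd x) n ↔ ∀ i, d ∣ x i := by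
    simp [Nat.dvd_gcd_iff, Finset.dvd_gcd_iff, Nat.dvd_of_mem_divisors hd]
  simp only [hdvd]
  rw [card_filter_piFinset_const_forall, Nat.card_Icc_filter_dvd, Fintype.card_fin, Nat.cast_pow]

theorem Vplus_eq_sum_moebius (m r N : ℕ) (hm : m ≠ 0) (hrN : r ≤ N) :
    (Vplus m r : ℤ) = ∑ d ∈ Icc 1 N, μ d * ((r / d : ℕ) : ℤ) ^ m := by
  set s := Fintype.piFinset fun _ : Fin m => Icc (1 : ℤ) r
  have i₀ : Fin m := ⟨0, Nat.pos_of_ne_zero hm⟩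
  have hx₀ : ∀ x ∈ s, 1 ≤ x i₀ ∧ x i₀ ≤ r := fun x hx => mem_Icc.1 (Fintype.mem_piFinset.1 hx i₀)
  have hG : ∀ x ∈ s, (univ.gcd x).natAbs ≠ 0 := fun x hx => by
    rw [Int.natAbs_ne_zero, Ne, Finset.gcd_eq_zero_iff]
    exact fun h => by linarith [(hx₀ x hx).1, h i₀ (mem_univ _)]
  have hD : ∀ x ∈ s, (univ.gcd x).natAbs.divisors ⊆ Icc 1 N := fun x hx e he => by
    obtain ⟨h1, h2⟩ := hx₀ x hx
    have hdvd : e ∣ (x i₀).natAbs :=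
      (Nat.dvd_of_mem_divisors he).trans (Int.natAbs_dvd_natAbs.2 (gcd_dvd (mem_univ i₀)))
    have := Nat.le_of_dvd (by omega) hdvd
    exact mem_Icc.2 ⟨Nat.pos_of_mem_divisors he, by omega⟩
  have hone : ∀ x ∈ s, univ.gcd x = 1 ↔ (univ.gcd x).natAbs = 1 := fun x _ => by
    have := Int.nonneg_of_normalize_eq_self (normalize_gcd (s := univ) (f := x))
    omega
  unfold Vplus
  rw [filter_congr hone, card_filter_eq_one_eq_sum_moebius s _ _ hG hD]
  refine sum_congr rfl fun d _ => ?_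
  simp only [s, ← Int.natCast_dvd, Finset.dvd_gcd_iff, mem_univ, true_implies]
  rw [card_filter_piFinset_const_forall, Int.card_Icc_filter_dvd, Fintype.card_fin, Nat.cast_pow]

theorem Vplus_succ_sub_Vplus (m n : ℕ) (hm : m ≠ 0) :
    (Vplus m (n + 1) : ℤ) - Vplus m n =
      ∑ d ∈ (n + 1).divisors,
        μ d * ((((n + 1) / d : ℕ) : ℤ) ^ m - ((((n + 1) / d : ℕ) : ℤ) - 1) ^ m) := by
  rw [Vplus_eq_sum_moebius m (n + 1) (n + 1) hm le_rfl,
    Vplus_eq_sum_moebius m n (n + 1) hm n.le_succ, ← sum_sub_distrib]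
  simp_rw [← mul_sub]
  have hsubset : (n + 1).divisors ⊆ Icc 1 (n + 1) := fun d hd =>
    mem_Icc.2 ⟨Nat.pos_of_mem_divisors hd, Nat.divisor_le hd⟩
  have hzero : ∀ d ∈ Icc 1 (n + 1), d ∉ (n + 1).divisors →
      μ d * ((((n + 1) / d : ℕ) : ℤ) ^ m - ((n / d : ℕ) : ℤ) ^ m) = 0 := fun d _ hd => by
    rw [Nat.succ_div, if_neg fun h => hd (Nat.mem_divisors.2 ⟨h, n.succ_ne_zero⟩), add_zero,
      sub_self, mul_zero]
  rw [← sum_subset hsubset hzero]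
  refine sum_congr rfl fun d hd => ?_
  rw [Nat.succ_div, if_pos (Nat.dvd_of_mem_divisors hd)]
  push_cast
  ring

theorem sum_alternating_choose_mul_J (m n : ℕ) (hn : n ≠ 0) :
    ∑ j ∈ range m, (-1 : ℤ) ^ (m - 1 - j) * (m.choose j : ℤ) * (J j n : ℤ) =
      ∑ d ∈ n.divisors, μ d * (((n / d : ℕ) : ℤ) ^ m - (((n / d : ℕ) : ℤ) - 1) ^ m) := by
  simp_rw [J_eq_sum_moebius _ n hn, mul_sum]
  rw [sum_comm]
  refine sum_congr rfl fun d _ => ?_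
  rw [← sum_range_alternating_choose_mul_pow, mul_sum]
  exact sum_congr rfl fun j _ => by ring

theorem Vplus_eq_alternating_sum_general (m : ℕ) (hm : 1 ≤ m) (r : ℕ) :
    (Vplus m r : ℤ) =
      ∑ n ∈ Finset.Icc 1 r, ∑ j ∈ Finset.range m,
        (-1 : ℤ) ^ (m - 1 - j) * (m.choose j : ℤ) * (J j n : ℤ) := by
  induction r with
  | zero => simp [Vplus_eq_sum_moebius m 0 0 (by omega) le_rfl]
  | succ n ih =>
    rw [sum_Icc_succ_top (by omega), ← ih, sum_alternating_choose_mul_J m (n + 1) n.succ_ne_zero,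
      ← Vplus_succ_sub_Vplus m n (by omega)]
    ring

theorem Vplus_eq_alternating_sum (m : ℕ) (hm : 1 ≤ m) (r : ℕ) (hr : 0 < r) :
    (Vplus m r : ℤ) =
      ∑ n ∈ Finset.Icc 1 r, ∑ j ∈ Finset.range m,
        (-1 : ℤ) ^ (m - 1 - j) * (m.choose j : ℤ) * (J j n : ℤ) :=
  Vplus_eq_alternating_sum_general m hm r
end

section
/- Let m = 2 or m = 3, let P = ∏ p be the product of all odd primes p < 100, and let k be a positive integer coprime to 2P. Then for r = k·P one has ∑_{d=1}^{r} (μ(d)/d^m) {r/d} < −1/20. -/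
/-!
Since `r` is odd, `{r/d} = 0` when `d ∣ r` and `{r/d} = 1/2` when `d = 2e` with `e ∣ r`.
Every odd squarefree number below `100` divides `r`, so apart from `d = 2`, which contributes
`-2^(-m-1)`, a squarefree `d` can contribute positively only if `d = 2e ≡ 2 mod 4` with `e ∣ r`
(at most `1/(2d^m)`) or if `d ≥ 100` (at most `d^(-m)`). Comparing both families with `∑ 1/n²`
bounds their total by `1/(16·6^(m-2)) + 1/99^(m-1)`, which is below `2^(-m-1) - 1/20` for
`m = 2, 3`.
-/

open Finset ArithmeticFunction
open scoped ArithmeticFunction.Moebius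

section Fract

variable {K : Type*} [Field K] [LinearOrder K] [IsStrictOrderedRing K] [FloorRing K]

lemma Int.fract_natCast_div_eq_zero_of_dvd {r d : ℕ} (h : d ∣ r) :
    Int.fract ((r : K) / d) = 0 := by
  rw [Int.fract_div_natCast_eq_div_natCast_mod, Nat.mod_eq_zero_of_dvd h, Nat.cast_zero, zero_div]

lemma Int.fract_natCast_div_two_mul_of_dvd {r e : ℕ} (hr : Odd r) (he : e ∣ r) :
    Int.fract ((r : K) / (2 * e : ℕ)) = 1 / 2 := by
  obtain ⟨s, rfl⟩ := he
  have he0 : (e : K) ≠ 0 := by exact_mod_cast (Nat.odd_mul.mp hr).1.pos.ne'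
  have hmod : e * s % (2 * e) = e := by
    rw [mul_comm 2, Nat.mul_mod_mul_left, Nat.odd_iff.mp (Nat.odd_mul.mp hr).2, mul_one]
  rw [Int.fract_div_natCast_eq_div_natCast_mod, hmod, Nat.cast_mul, Nat.cast_two]
  field_simp

end Fract

lemma moebius_div_pow_mul_le (m d : ℕ) {f : ℝ} (hf : 0 ≤ f) :
    (μ d : ℝ) / d ^ m * f ≤ f / d ^ m := by
  have hμ : (μ d : ℝ) ≤ 1 := by exact_mod_cast (abs_le.mp abs_moebius_le_one).2
  rw [div_mul_eq_mul_div]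
  gcongr
  nlinarith

lemma moebius_two_div_pow_mul_fract {r : ℕ} (m : ℕ) (hr : Odd r) :
    (μ 2 : ℝ) / ((2 : ℕ) : ℝ) ^ m * Int.fract ((r : ℝ) / (2 : ℕ)) = -1 / 2 ^ (m + 1) := by
  have h := Int.fract_natCast_div_two_mul_of_dvd (K := ℝ) hr (one_dvd r)
  rw [mul_one] at h
  rw [h, moebius_apply_prime Nat.prime_two]
  push_cast
  ring

lemma moebius_div_pow_mul_fract_le {m r N d : ℕ} (hr : Odd r)
    (hN : ∀ e, Odd e → Squarefree e → e ≤ N → e ∣ r) :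
    (μ d : ℝ) / d ^ m * Int.fract ((r : ℝ) / d) ≤
      ((if d = 2 then -1 / 2 ^ (m + 1) else 0) +
        if d % 4 = 2 ∧ 6 ≤ d then 1 / (2 * (d : ℝ) ^ m) else 0) +
        if N < d then 1 / (d : ℝ) ^ m else 0 := by
  by_cases h2 : d = 2
  · subst h2
    rw [moebius_two_div_pow_mul_fract m hr, if_pos rfl, if_neg (by omega), add_zero]
    exact le_add_of_nonneg_right (by split_ifs <;> positivity)
  rw [if_neg h2, zero_add]
  by_cases hNd : N < d
  · rw [if_pos hNd]
    calc _ ≤ Int.fract ((r : ℝ) / d) / d ^ m := moebius_div_pow_mul_le m d (Int.fract_nonneg _)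
      _ ≤ 1 / d ^ m := by gcongr; exact (Int.fract_lt_one _).le
      _ ≤ _ := le_add_of_nonneg_left (by split_ifs <;> positivity)
  rw [if_neg hNd, add_zero]
  have hB : (0 : ℝ) ≤ if d % 4 = 2 ∧ 6 ≤ d then 1 / (2 * (d : ℝ) ^ m) else 0 := by
    split_ifs <;> positivity
  by_cases hsq : Squarefree d
  swap
  · simpa [moebius_eq_zero_of_not_squarefree hsq] using hB
  rcases Nat.even_or_odd d with ⟨e, rfl⟩ | hodd
  · have heodd : Odd e := by
      refine Nat.not_even_iff_odd.mp fun ⟨u, hu⟩ => ?_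
      have := hsq 2 ⟨u, by omega⟩
      simp at this
    have he : e ∣ r := hN e heodd (hsq.squarefree_of_dvd ⟨2, by omega⟩) (by omega)
    have h := Int.fract_natCast_div_two_mul_of_dvd (K := ℝ) hr he
    rw [two_mul e] at h
    have hd : (e + e) % 4 = 2 ∧ 6 ≤ e + e := by
      obtain ⟨t, rfl⟩ := heodd
      omega
    rw [h, if_pos hd]
    calc _ ≤ 1 / 2 / ((e + e : ℕ) : ℝ) ^ m := moebius_div_pow_mul_le m _ (by norm_num)
      _ = _ := by ring
  · rw [Int.fract_natCast_div_eq_zero_of_dvd (hN d hodd hsq (by omega)), mul_zero]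
    exact hB

lemma sum_moebius_div_pow_mul_fract_le {m r N : ℕ} (hr : Odd r) (hr1 : 1 < r)
    (hN : ∀ e, Odd e → Squarefree e → e ≤ N → e ∣ r) :
    ∑ d ∈ Icc 1 r, (μ d : ℝ) / d ^ m * Int.fract ((r : ℝ) / d) ≤
      -1 / 2 ^ (m + 1) + ∑ j ∈ Ioo 0 r, 1 / (2 * (4 * (j : ℝ) + 2) ^ m) +
        ∑ d ∈ Ioc N r, 1 / (d : ℝ) ^ m := by
  have h2 : 2 ∈ Icc 1 r := by
    have := Nat.odd_iff.mp hr
    simp only [mem_Icc]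
    omega
  refine (sum_le_sum fun d _ => moebius_div_pow_mul_fract_le (m := m) hr hN).trans ?_
  rw [sum_add_distrib, sum_add_distrib, sum_ite_eq', if_pos h2, ← sum_filter, ← sum_filter]
  gcongr
  · calc _ ≤ ∑ d ∈ (Ioo 0 r).image (4 * · + 2), 1 / (2 * ((d : ℕ) : ℝ) ^ m) := by
          apply sum_le_sum_of_subset_of_nonneg
          · intro d hd
            simp only [mem_filter, mem_Icc, mem_image, mem_Ioo] at hd ⊢
            exact ⟨d / 4, by omega, by omega⟩
          · intros
            positivity
      _ = _ := by
          rw [sum_image fun a _ b _ h => by simpa using h]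
          push_cast
          rfl
  · apply le_of_eq
    ext d
    simp only [mem_filter, mem_Icc, mem_Ioc]
    omega

lemma pow_sub_two_mul_sq_le_pow {a x : ℝ} {m : ℕ} (ha : 0 ≤ a) (hax : a ≤ x) (hm : 2 ≤ m) :
    a ^ (m - 2) * x ^ 2 ≤ x ^ m :=
  calc a ^ (m - 2) * x ^ 2 ≤ x ^ (m - 2) * x ^ 2 := by gcongr
    _ = x ^ m := by rw [← pow_add, Nat.sub_add_cancel hm]

lemma sum_Ioo_one_div_two_mul_four_mul_add_two_pow_le {m : ℕ} (hm : 2 ≤ m) (b : ℕ) :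
    ∑ j ∈ Ioo 0 b, 1 / (2 * (4 * (j : ℝ) + 2) ^ m) ≤ 1 / (16 * 6 ^ (m - 2)) := by
  calc _ ≤ ∑ j ∈ Ioo 0 b, 1 / (32 * 6 ^ (m - 2)) * ((j : ℝ) ^ 2)⁻¹ := by
        gcongr with j hj
        have hj : (1 : ℝ) ≤ j := by exact_mod_cast (mem_Ioo.mp hj).1
        have hpow := pow_sub_two_mul_sq_le_pow (a := 6) (x := 4 * j + 2) (by norm_num)
          (by linarith) hm
        rw [← one_div, one_div_mul_one_div]
        apply one_div_le_one_div_of_le (by positivity)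
        nlinarith [pow_pos (by norm_num : (0 : ℝ) < 6) (m - 2)]
    _ = 1 / (32 * 6 ^ (m - 2)) * ∑ j ∈ Ioo 0 b, ((j : ℝ) ^ 2)⁻¹ := by rw [mul_sum]
    _ ≤ 1 / (32 * 6 ^ (m - 2)) * 2 := by gcongr; simpa using sum_Ioo_inv_sq_le (α := ℝ) 0 b
    _ = _ := by ring

lemma sum_Ioc_one_div_pow_le {m N : ℕ} (hm : 2 ≤ m) (hN : N ≠ 0) (b : ℕ) :
    ∑ d ∈ Ioc N b, 1 / (d : ℝ) ^ m ≤ 1 / (N : ℝ) ^ (m - 1) := by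
  have hN₀ : (0 : ℝ) < N := by exact_mod_cast Nat.pos_of_ne_zero hN
  rcases lt_or_ge b N with hb | hb
  · rw [Ioc_eq_empty (by omega), sum_empty]
    positivity
  calc _ ≤ ∑ d ∈ Ioc N b, 1 / (N : ℝ) ^ (m - 2) * ((d : ℝ) ^ 2)⁻¹ := by
        gcongr with d hd
        have hNd : (N : ℝ) ≤ d := by exact_mod_cast (mem_Ioc.mp hd).1.le
        have hd₀ : (0 : ℝ) < d := hN₀.trans_le hNd
        rw [← one_div, one_div_mul_one_div]
        exact one_div_le_one_div_of_le (by positivity) (pow_sub_two_mul_sq_le_pow hN₀.le hNd hm)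
    _ = 1 / (N : ℝ) ^ (m - 2) * ∑ d ∈ Ioc N b, ((d : ℝ) ^ 2)⁻¹ := by rw [mul_sum]
    _ ≤ 1 / (N : ℝ) ^ (m - 2) * (N : ℝ)⁻¹ := by
        gcongr
        exact (sum_Ioc_inv_sq_le_sub hN hb).trans (sub_le_self _ (by positivity))
    _ = _ := by rw [show m - 1 = m - 2 + 1 by omega, pow_succ]; field_simp

lemma Squarefree.dvd_prod_of_primeFactors_subset {e : ℕ} {s : Finset ℕ} (he : Squarefree e)
    (hs : e.primeFactors ⊆ s) : e ∣ ∏ p ∈ s, p := by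
  rw [← Nat.prod_primeFactors_of_squarefree he]
  exact prod_dvd_prod_of_subset _ _ _ hs

lemma dvd_prod_odd_primes_of_odd_of_squarefree {N e : ℕ} (he : Odd e) (hsq : Squarefree e)
    (heN : e < N) : e ∣ ∏ p ∈ (range N).filter fun p => p.Prime ∧ Odd p, p := by
  refine hsq.dvd_prod_of_primeFactors_subset fun p hp => ?_
  obtain ⟨hp, hpe, -⟩ := Nat.mem_primeFactors.mp hp
  have hpN : p < N := (Nat.le_of_dvd he.pos hpe).trans_lt heN
  exact mem_filter.mpr ⟨mem_range.mpr hpN, hp, he.of_dvd_nat hpe⟩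

theorem moebius_fract_sum_neg_m23_general (m : ℕ) (hm : m = 2 ∨ m = 3) (k : ℕ)
    (hcop : Nat.Coprime k
      (2 * ∏ p ∈ (Finset.range 100).filter fun p => Nat.Prime p ∧ Odd p, p)) :
    ∑ d ∈ Finset.Icc 1 (k * ∏ p ∈ (Finset.range 100).filter fun p => Nat.Prime p ∧ Odd p, p),
        (ArithmeticFunction.moebius d : ℝ) / (d : ℝ) ^ m *
          Int.fract (((k * ∏ p ∈ (Finset.range 100).filter fun p => Nat.Prime p ∧ Odd p, p : ℕ) : ℝ) / d)
      < -1 / 20 := by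
  set P := ∏ p ∈ (range 100).filter fun p => p.Prime ∧ Odd p, p
  have hPodd : Odd P :=
    prod_induction _ Odd (fun _ _ => Odd.mul) odd_one fun p hp => (mem_filter.mp hp).2.2
  have hkodd : Odd k := Nat.coprime_two_right.mp (hcop.coprime_dvd_right (dvd_mul_right 2 P))
  have hdvd : ∀ e, Odd e → Squarefree e → e ≤ 99 → e ∣ k * P := fun e he hsq he99 =>
    (dvd_prod_odd_primes_of_odd_of_squarefree he hsq (by omega)).mul_left k
  have hr1 : 1 < k * P := by
    have := Nat.le_of_dvd (hkodd.mul hPodd).pos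
      (hdvd 3 (by decide) Nat.prime_three.prime.squarefree (by norm_num))
    omega
  calc _ ≤ -1 / 2 ^ (m + 1) + ∑ j ∈ Ioo 0 (k * P), 1 / (2 * (4 * (j : ℝ) + 2) ^ m) +
        ∑ d ∈ Ioc 99 (k * P), 1 / (d : ℝ) ^ m :=
        sum_moebius_div_pow_mul_fract_le (hkodd.mul hPodd) hr1 hdvd
    _ ≤ -1 / 2 ^ (m + 1) + 1 / (16 * 6 ^ (m - 2)) + 1 / ((99 : ℕ) : ℝ) ^ (m - 1) := by
        have hm2 : 2 ≤ m := by omega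
        gcongr
        exacts [sum_Ioo_one_div_two_mul_four_mul_add_two_pow_le hm2 _,
          sum_Ioc_one_div_pow_le hm2 (by norm_num) _]
    _ < -1 / 20 := by rcases hm with rfl | rfl <;> norm_num

theorem moebius_fract_sum_neg_m23 (m : ℕ) (hm : m = 2 ∨ m = 3) (k : ℕ) (hk : 0 < k)
    (hcop : Nat.Coprime k
      (2 * ∏ p ∈ (Finset.range 100).filter fun p => Nat.Prime p ∧ Odd p, p)) :
    ∑ d ∈ Finset.Icc 1 (k * ∏ p ∈ (Finset.range 100).filter fun p => Nat.Prime p ∧ Odd p, p),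
        (ArithmeticFunction.moebius d : ℝ) / (d : ℝ) ^ m *
          Int.fract (((k * ∏ p ∈ (Finset.range 100).filter fun p => Nat.Prime p ∧ Odd p, p : ℕ) : ℝ) / d)
      < -1 / 20 :=
  moebius_fract_sum_neg_m23_general m hm k hcop
end
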